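/- Let V be a finite-dimensional vector space over ℂ with a decomposition V = ⊕_{μ ∈ I} V_μ into weight spaces for an abelian Lie algebra 𝔥 acting diagonalizably, and let μ ≠ 0 be a weight. Fix n ≥ 1 and define D^n : S^n(𝔥) ⊗ V → S^{n-1}(𝔥) ⊗ V by D^n(X_1⋯X_n ⊗ v) = Σ_i X_1⋯X̂_i⋯X_n ⊗ X_i·v. Then S^{n-1}(𝔥) ⊗ V_μ is contained in the image of D^n. -/

import Mathlib

/-!
Pick `H ∈ 𝔥` with `μ H ≠ 0`. For a weight vector `v ∈ V_μ` the map `Dⁿ` acts on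
`X₁⋯Xₙ ⊗ v` by `Σᵢ μ(Xᵢ) X₁⋯X̂ᵢ⋯Xₙ ⊗ v`. If every factor of `Y = Y₁⋯Yₙ₋₁` is either `H` or lies
in `ker μ`, this gives `Dⁿ(H Y ⊗ v) = (k + 1) μ(H) Y ⊗ v`, where `k` counts the factors equal to
`H`, so `Y ⊗ v` is in the image. Since `H` and `ker μ` together span `𝔥`, such products span
`Sⁿ⁻¹(𝔥)`.
-/

open TensorProduct

/-- Relations defining the symmetric power as a quotient of the tensor power. -/
noncomputable def symRel (n : ℕ) (M : Type) [AddCommGroup M] [Module ℂ M] :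
    Submodule ℂ (⨂[ℂ]^n M) :=
  Submodule.span ℂ {x | ∃ (f : Fin n → M) (i j : Fin n),
    x = PiTensorProduct.tprod ℂ f - PiTensorProduct.tprod ℂ (f ∘ Equiv.swap i j)}

/-- The `n`-th symmetric power of a complex vector space. -/
abbrev SymPow (n : ℕ) (M : Type) [AddCommGroup M] [Module ℂ M] :=
  (⨂[ℂ]^n M) ⧸ symRel n M

/-- Canonical projection from the tensor power to the symmetric power. -/
noncomputable def symMk (n : ℕ) (M : Type) [AddCommGroup M] [Module ℂ M] :
    (⨂[ℂ]^n M) →ₗ[ℂ] SymPow n M := (symRel n M).mkQ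

/-- The product X₁X₂⋯Xₙ in the symmetric power. -/
noncomputable def symProd (n : ℕ) (M : Type) [AddCommGroup M] [Module ℂ M] (f : Fin n → M) :
    SymPow n M := symMk n M (PiTensorProduct.tprod ℂ f)

/-- The weight space of a Lie algebra module for the weight μ (simultaneous eigenspace). -/
noncomputable def wtSpace (𝔥 V : Type) [LieRing 𝔥] [LieAlgebra ℂ 𝔥] [AddCommGroup V]
    [Module ℂ V] [LieRingModule 𝔥 V] [LieModule ℂ 𝔥 V] (μ : Module.Dual ℂ 𝔥) :
    Submodule ℂ V :=
  ⨅ H : 𝔥, Module.End.eigenspace (LieModule.toEnd ℂ 𝔥 V H) (μ H)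

namespace PiTensorProduct

variable {R ι : Type*} [CommSemiring R] [Fintype ι] {M : ι → Type*}
  [∀ i, AddCommMonoid (M i)] [∀ i, Module R (M i)]

theorem span_image_tprod_pi_eq_top (s : ∀ i, Set (M i))
    (hs : ∀ i, Submodule.span R (s i) = ⊤) :
    Submodule.span R (tprod R '' Set.univ.pi s) = ⊤ := by
  classical
  set P := Submodule.span R (tprod R '' Set.univ.pi s)
  -- Free the coordinates in `T` one at a time, using linearity of `tprod` in each of them.
  suffices key : ∀ T : Finset ι, ∀ f : ∀ i, M i, (∀ i ∉ T, f i ∈ s i) → tprod R f ∈ P by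
    rw [eq_top_iff, ← span_tprod_eq_top, Submodule.span_le]
    rintro _ ⟨f, rfl⟩
    exact key Finset.univ f (by simp)
  intro T
  induction T using Finset.induction_on with
  | empty =>
    exact fun f hf => Submodule.subset_span ⟨f, fun i _ => hf i (Finset.notMem_empty i), rfl⟩
  | insert i T _ ih =>
    intro f hf
    have hs_le : s i ⊆ P.comap ((tprod R).toLinearMap f i) := by
      intro x hx
      refine ih _ fun j hj => ?_
      rcases eq_or_ne j i with rfl | hji
      · simpa using hx
      · simpa [hji] using hf j (by simp [hji, hj])
    simpa using Submodule.span_le.mpr hs_le ((hs i).ge (Submodule.mem_top (x := f i)))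

end PiTensorProduct

section SymPow

variable {M : Type} [AddCommGroup M] [Module ℂ M]

theorem symProd_comp_swap (n : ℕ) (f : Fin n → M) (i j : Fin n) :
    symProd n M (f ∘ Equiv.swap i j) = symProd n M f :=
  ((Submodule.Quotient.eq (symRel n M)).mpr (Submodule.subset_span ⟨f, i, j, rfl⟩)).symm

theorem symProd_comp_perm (n : ℕ) (e : Equiv.Perm (Fin n)) :
    ∀ f : Fin n → M, symProd n M (f ∘ e) = symProd n M f := by
  induction e using Equiv.Perm.swap_induction_on with
  | one => exact fun f => rfl
  | swap_mul σ i j _ ih =>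
    intro f
    rw [Equiv.Perm.coe_mul, ← Function.comp_assoc, ih, symProd_comp_swap]

theorem symProd_cons_removeNth (n : ℕ) (f : Fin (n + 1) → M) (p : Fin (n + 1)) :
    symProd (n + 1) M (Fin.cons (f p) (p.removeNth f)) = symProd (n + 1) M f := by
  rw [Fin.cons_removeNth_eq_comp_cycleRange_symm, symProd_comp_perm]

theorem symProd_cons_comp_succ_succAbove {m : ℕ} (x : M) (g : Fin m → M) (j : Fin m)
    (hj : g j = x) : symProd m M (Fin.cons x g ∘ j.succ.succAbove) = symProd m M g := by
  cases m with
  | zero => exact j.elim0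
  | succ k => rw [Fin.cons_comp_succ_succAbove, ← hj, symProd_cons_removeNth]

end SymPow

theorem lie_eq_smul_of_mem_wtSpace {𝔥 V : Type} [LieRing 𝔥] [LieAlgebra ℂ 𝔥] [AddCommGroup V]
    [Module ℂ V] [LieRingModule 𝔥 V] [LieModule ℂ 𝔥 V] {μ : Module.Dual ℂ 𝔥} {v : V}
    (hv : v ∈ wtSpace 𝔥 V μ) (X : 𝔥) : ⁅X, v⁆ = μ X • v := by
  simpa using Module.End.mem_eigenspace_iff.mp ((Submodule.mem_iInf _).mp hv X)

section Contraction

variable {𝔥 V : Type} [LieRing 𝔥] [LieAlgebra ℂ 𝔥] [AddCommGroup V] [Module ℂ V]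
  [LieRingModule 𝔥 V] [LieModule ℂ 𝔥 V] {μ : Module.Dual ℂ 𝔥} {m : ℕ}
  {D : (SymPow (m + 1) 𝔥 ⊗[ℂ] V) →ₗ[ℂ] SymPow m 𝔥 ⊗[ℂ] V}

theorem apply_symProd_tmul_of_mem_wtSpace
    (hD : ∀ (f : Fin (m + 1) → 𝔥) (v : V),
      D (symProd (m + 1) 𝔥 f ⊗ₜ[ℂ] v) =
        ∑ i : Fin (m + 1), symProd m 𝔥 (f ∘ i.succAbove) ⊗ₜ[ℂ] ⁅f i, v⁆)
    {v : V} (hv : v ∈ wtSpace 𝔥 V μ) (f : Fin (m + 1) → 𝔥) :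
    D (symProd (m + 1) 𝔥 f ⊗ₜ[ℂ] v) =
      ∑ i : Fin (m + 1), μ (f i) • (symProd m 𝔥 (f ∘ i.succAbove) ⊗ₜ[ℂ] v) := by
  simp only [hD, lie_eq_smul_of_mem_wtSpace hv, tmul_smul]

theorem symProd_tmul_mem_range_of_forall_mem_insert_ker
    (hD : ∀ (f : Fin (m + 1) → 𝔥) (v : V),
      D (symProd (m + 1) 𝔥 f ⊗ₜ[ℂ] v) =
        ∑ i : Fin (m + 1), symProd m 𝔥 (f ∘ i.succAbove) ⊗ₜ[ℂ] ⁅f i, v⁆)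
    {v : V} (hv : v ∈ wtSpace 𝔥 V μ) {H : 𝔥} (hH : μ H ≠ 0) (g : Fin m → 𝔥)
    (hg : ∀ j, g j ∈ insert H (LinearMap.ker μ : Set 𝔥)) :
    symProd m 𝔥 g ⊗ₜ[ℂ] v ∈ LinearMap.range D := by
  classical
  have hμg : ∀ j, μ (g j) = if g j = H then μ H else 0 := fun j => by
    rcases hg j with hj | hj
    · simp [hj]
    · split_ifs with h
      · rw [h]
      · exact hj
  have hterm : ∀ j, μ (g j) • (symProd m 𝔥 (Fin.cons H g ∘ j.succ.succAbove) ⊗ₜ[ℂ] v) =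
      μ (g j) • (symProd m 𝔥 g ⊗ₜ[ℂ] v) := fun j => by
    by_cases h : g j = H
    · rw [symProd_cons_comp_succ_succAbove H g j h]
    · simp [hμg j, h]
  set k := (Finset.univ.filter fun j => g j = H).card
  have hD_cons : D (symProd (m + 1) 𝔥 (Fin.cons H g) ⊗ₜ[ℂ] v) =
      ((k + 1 : ℕ) * μ H) • (symProd m 𝔥 g ⊗ₜ[ℂ] v) := by
    rw [apply_symProd_tmul_of_mem_wtSpace hD hv, Fin.sum_univ_succ]
    simp only [Fin.cons_zero, Fin.cons_succ, Fin.succAbove_zero, Fin.cons_comp_succ, hterm,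
      ← Finset.sum_smul, ← add_smul]
    simp only [hμg, Finset.sum_ite, Finset.sum_const_zero, Finset.sum_const, nsmul_eq_mul, k]
    push_cast
    ring_nf
  have hcoeff : ((k + 1 : ℕ) * μ H : ℂ) ≠ 0 := mul_ne_zero (Nat.cast_ne_zero.mpr k.succ_ne_zero) hH
  refine ⟨((k + 1 : ℕ) * μ H)⁻¹ • symProd (m + 1) 𝔥 (Fin.cons H g) ⊗ₜ[ℂ] v, ?_⟩
  rw [map_smul, hD_cons, smul_smul, inv_mul_cancel₀ hcoeff, one_smul]

end Contraction

theorem statement0_general (𝔥 V : Type) [LieRing 𝔥] [LieAlgebra ℂ 𝔥]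
    [AddCommGroup V] [Module ℂ V] [LieRingModule 𝔥 V] [LieModule ℂ 𝔥 V]
    (μ : Module.Dual ℂ 𝔥) (hμ : μ ≠ 0) (m : ℕ)
    (D : (SymPow (m + 1) 𝔥 ⊗[ℂ] V) →ₗ[ℂ] SymPow m 𝔥 ⊗[ℂ] V)
    (hD : ∀ (f : Fin (m + 1) → 𝔥) (v : V),
      D (symProd (m + 1) 𝔥 f ⊗ₜ[ℂ] v) =
        ∑ i : Fin (m + 1), symProd m 𝔥 (f ∘ i.succAbove) ⊗ₜ[ℂ] ⁅f i, v⁆) :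
    ∀ (t : ⨂[ℂ]^m 𝔥) (v : V), v ∈ wtSpace 𝔥 V μ →
      symMk m 𝔥 t ⊗ₜ[ℂ] v ∈ LinearMap.range D := by
  intro t v hv
  obtain ⟨H, hH⟩ : ∃ H, μ H ≠ 0 := by simpa using DFunLike.ne_iff.mp hμ
  have hspan : Submodule.span ℂ (insert H (LinearMap.ker μ : Set 𝔥)) = ⊤ := by
    rw [Submodule.span_insert, Submodule.span_eq, LinearMap.span_singleton_sup_ker_eq_top μ hH]
  have hle : Submodule.span ℂ
      (PiTensorProduct.tprod ℂ '' Set.univ.pi fun _ => insert H (LinearMap.ker μ : Set 𝔥)) ≤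
      (LinearMap.range D).comap ((TensorProduct.mk ℂ _ V).flip v ∘ₗ symMk m 𝔥) := by
    rw [Submodule.span_le]
    rintro _ ⟨g, hg, rfl⟩
    exact symProd_tmul_mem_range_of_forall_mem_insert_ker hD hv hH g fun j => hg j trivial
  rw [PiTensorProduct.span_image_tprod_pi_eq_top _ fun _ => hspan] at hle
  exact hle trivial

theorem statement0 (𝔥 V : Type) [LieRing 𝔥] [LieAlgebra ℂ 𝔥] [IsLieAbelian 𝔥]
    [AddCommGroup V] [Module ℂ V] [LieRingModule 𝔥 V] [LieModule ℂ 𝔥 V]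
    [FiniteDimensional ℂ 𝔥] [FiniteDimensional ℂ V]
    (hdiag : ⨆ μ : Module.Dual ℂ 𝔥, wtSpace 𝔥 V μ = ⊤)
    (μ : Module.Dual ℂ 𝔥) (hμ : μ ≠ 0) (m : ℕ)
    (D : (SymPow (m + 1) 𝔥 ⊗[ℂ] V) →ₗ[ℂ] SymPow m 𝔥 ⊗[ℂ] V)
    (hD : ∀ (f : Fin (m + 1) → 𝔥) (v : V),
      D (symProd (m + 1) 𝔥 f ⊗ₜ[ℂ] v) =
        ∑ i : Fin (m + 1), symProd m 𝔥 (f ∘ i.succAbove) ⊗ₜ[ℂ] ⁅f i, v⁆) :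
    ∀ (t : ⨂[ℂ]^m 𝔥) (v : V), v ∈ wtSpace 𝔥 V μ →
      symMk m 𝔥 t ⊗ₜ[ℂ] v ∈ LinearMap.range D :=
  statement0_general 𝔥 V μ hμ m D hD
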